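/- Assume the MFS setup with eigenvalue bounds (H_s) and boundary-data decay |v̂(m)| ≤ C_v·ρ^{−|m|} for all m ∈ ℤ, where ρ > R² (and R > 1). Then there exists a constant C > 0, depending on R, ρ, c_s, C_s, C_v (and on ŝ(0), v̂(0)) but not on N, such that for every even integer N ≥ 2 there exists a coefficient vector α̂ ∈ ℂ^N with boundary error t(α̂) ≤ C·R^{−N}. -/

import Mathlib

/-!
Take `α̂_k = (2π/N) v̂(k)/ŝ(k)`. The error then vanishes on the window, and what remains are the
aliases `m = k + N j` (`j ≠ 0`) of window indices `k`, each contributing `ŝ(m) v̂(k)/ŝ(k) - v̂(m)`.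
As `ρ > R²`, the quotient `v̂(k)/ŝ(k)` decays like `ρ^{-|k|/2}`. With `ζ = max (R²/ρ) R⁻¹ < 1`
this gives `|ŝ(m) v̂(k)/ŝ(k)|² ≲ R^{-2(|m|+|k|)} ζ^{|k|}` where `|m| + |k| ≥ N |j|`, and
`|v̂(m)|² ≲ ρ^{-2|m|} ≤ R^{-4|m|} ζ^{2|m|}` where `2|m| ≥ N`. So each alias contributes
`O(R^{-2N} ζ^{|j|+|k|})`, and summing over the pairs `(j, k)` gives `t(α̂)² = O(R^{-2N})`.
-/

open scoped BigOperators ENNReal NNReal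

noncomputable section

/-- The unique representative of `m` modulo `N` lying in the window `(-N/2, N/2]`. -/
def winRep (N : ℕ) (m : ℤ) : ℤ := (m + (N : ℤ) / 2 - 1) % (N : ℤ) - ((N : ℤ) / 2 - 1)

/-- The index window `(-N/2, N/2]` as a finite set of integers. -/
def window (N : ℕ) : Finset ℤ := Finset.Icc (-(N : ℤ) / 2 + 1) ((N : ℤ) / 2)

/-- The norm `|α̂|` of a coefficient vector indexed by the window. -/
def coefNorm (N : ℕ) (a : ℤ → ℂ) : ℝ := Real.sqrt (∑ k ∈ window N, ‖a k‖ ^ 2)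

/-- The boundary error norm
`t(α̂) = (2π·∑_{m∈ℤ} |(N/(2π))·ŝ(m)·α̂_{⟨m⟩_N} − v̂(m)|²)^{1/2}`, valued in `[0,∞]`. -/
def tErr (N : ℕ) (s v a : ℤ → ℂ) : ℝ≥0∞ :=
  (ENNReal.ofReal (2 * Real.pi) *
    ∑' m : ℤ, (‖((N : ℂ) / (2 * (Real.pi : ℂ))) * s m * a (winRep N m) - v m‖₊ : ℝ≥0∞) ^ 2)
    ^ (1 / 2 : ℝ)

lemma zpow_neg_abs_eq_inv_pow_natAbs {α : Type*} [DivisionMonoid α] (x : α) (k : ℤ) :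
    x ^ (-|k|) = x⁻¹ ^ k.natAbs := by
  rw [Int.abs_eq_natAbs, zpow_neg, ← inv_zpow, zpow_natCast]

lemma natCast_mul_pow_le_inv_one_sub {x : ℝ} (h0 : 0 ≤ x) (h1 : x < 1) (n : ℕ) :
    n * x ^ n ≤ (1 - x)⁻¹ :=
  calc (n : ℝ) * x ^ n = ∑ _i ∈ Finset.range n, x ^ n := by simp [mul_comm]
    _ ≤ ∑ i ∈ Finset.range n, x ^ i :=
        Finset.sum_le_sum fun i hi => pow_le_pow_of_le_one h0 h1.le (Finset.mem_range.mp hi).le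
    _ ≤ ∑' i : ℕ, x ^ i :=
        (summable_geometric_of_lt_one h0 h1).sum_le_tsum _ fun i _ => by positivity
    _ = (1 - x)⁻¹ := tsum_geometric_of_lt_one h0 h1

lemma exists_le_mul_pow_natAbs {u : ℤ → ℝ} {C x y : ℝ} (hC : 0 ≤ C) (hx : 0 ≤ x) (hxy : x < y)
    (hu : ∀ k ≠ 0, u k ≤ C * k.natAbs * x ^ k.natAbs) :
    ∃ M, ∀ k, u k ≤ M * y ^ k.natAbs := by
  have hy : 0 < y := hx.trans_lt hxy
  have hxy₁ : x / y < 1 := (div_lt_one hy).2 hxy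
  refine ⟨max (C * (1 - x / y)⁻¹) (u 0), fun k => ?_⟩
  rcases eq_or_ne k 0 with rfl | hk
  · simp
  calc u k ≤ C * (k.natAbs * (x / y) ^ k.natAbs) * y ^ k.natAbs := by
        rw [div_pow, mul_div_assoc', mul_assoc, div_mul_cancel₀ _ (by positivity), ← mul_assoc]
        exact hu k hk
    _ ≤ C * (1 - x / y)⁻¹ * y ^ k.natAbs := by
        gcongr
        exact natCast_mul_pow_le_inv_one_sub (by positivity) hxy₁ _
    _ ≤ _ := by gcongr; exact le_max_left _ _

lemma ENNReal.tsum_pow_natAbs_le (z : ℝ≥0∞) : ∑' k : ℤ, z ^ k.natAbs ≤ 2 * (1 - z)⁻¹ := by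
  have hneg : ∀ n : ℕ, (-((n : ℤ) + 1)).natAbs = n + 1 := by omega
  rw [tsum_of_nat_of_neg_add_one ENNReal.summable ENNReal.summable, two_mul,
    ← ENNReal.tsum_geometric]
  simp only [Int.natAbs_natCast, hneg]
  exact add_le_add_right (ENNReal.tsum_comp_le_tsum_of_injective (add_left_injective 1) _) _

lemma tsum_le_of_le_pow_natAbs {f : ℤ → ℝ≥0∞} {d : ℤ → ℤ × ℤ} (hd : d.Injective) {c ζ : ℝ}
    (hc : 0 ≤ c) (hζ0 : 0 ≤ ζ) (hζ1 : ζ < 1)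
    (hf : ∀ m, f m ≤ ENNReal.ofReal (c * (ζ ^ (d m).1.natAbs * ζ ^ (d m).2.natAbs))) :
    ∑' m, f m ≤ ENNReal.ofReal (c * (2 * (1 - ζ)⁻¹) ^ 2) := by
  set z := ENNReal.ofReal ζ
  set g : ℤ × ℤ → ℝ≥0∞ := fun p => ENNReal.ofReal c * (z ^ p.1.natAbs * z ^ p.2.natAbs)
  have hfg : ∀ m, f m ≤ g (d m) := fun m => by
    simpa only [g, z, ENNReal.ofReal_mul hc, ENNReal.ofReal_mul (pow_nonneg hζ0 _),
      ENNReal.ofReal_pow hζ0] using hf m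
  have hg : ∑' p, g p = ENNReal.ofReal c * ((∑' i : ℤ, z ^ i.natAbs) * ∑' j : ℤ, z ^ j.natAbs) := by
    simp only [g, ENNReal.tsum_mul_left, ENNReal.tsum_prod', ENNReal.tsum_mul_right]
  have hz : (1 - z)⁻¹ = ENNReal.ofReal (1 - ζ)⁻¹ := by
    rw [ENNReal.ofReal_inv_of_pos (by linarith), ENNReal.ofReal_sub _ hζ0, ENNReal.ofReal_one]
  calc ∑' m, f m ≤ ∑' m, g (d m) := ENNReal.tsum_le_tsum hfg
    _ ≤ ∑' p, g p := ENNReal.tsum_comp_le_tsum_of_injective hd g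
    _ ≤ ENNReal.ofReal c * ((2 * (1 - z)⁻¹) * (2 * (1 - z)⁻¹)) := by
        rw [hg]; gcongr <;> exact ENNReal.tsum_pow_natAbs_le z
    _ = ENNReal.ofReal (c * (2 * (1 - ζ)⁻¹) ^ 2) := by
        rw [hz, ← ENNReal.ofReal_ofNat 2, ← ENNReal.ofReal_mul (by norm_num),
          ← ENNReal.ofReal_mul (by positivity), ← ENNReal.ofReal_mul hc, sq]

lemma ENNReal.ofReal_mul_rpow_half_le {a B x : ℝ} {S : ℝ≥0∞} (ha : 0 ≤ a) (hB : 0 ≤ B)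
    (hx : 0 ≤ x) (hS : S ≤ ENNReal.ofReal (B * x ^ 2)) :
    (ENNReal.ofReal a * S) ^ (1 / 2 : ℝ) ≤ ENNReal.ofReal (√(a * B) * x) :=
  calc (ENNReal.ofReal a * S) ^ (1 / 2 : ℝ) ≤ ENNReal.ofReal (a * (B * x ^ 2)) ^ (1 / 2 : ℝ) := by
        rw [ENNReal.ofReal_mul ha]; gcongr
    _ = ENNReal.ofReal (√(a * B) * x) := by
        rw [ENNReal.ofReal_rpow_of_nonneg (by positivity) (by norm_num), ← Real.sqrt_eq_rpow,
          ← mul_assoc, Real.sqrt_mul (by positivity), Real.sqrt_sq hx]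

def winQuot (N : ℕ) (m : ℤ) : ℤ := (m - winRep N m) / N

lemma winRep_add_mul_winQuot (N : ℕ) (m : ℤ) : winRep N m + N * winQuot N m = m := by
  have hdvd : (N : ℤ) ∣ m - winRep N m := by
    have : m - winRep N m = (m + N / 2 - 1) - (m + N / 2 - 1) % N := by unfold winRep; ring
    exact this ▸ Int.dvd_self_sub_of_emod_eq rfl
  rw [winQuot, Int.mul_ediv_cancel' hdvd]
  ring

lemma injective_winRep_winQuot (N : ℕ) : (fun m => (winRep N m, winQuot N m)).Injective :=
  fun m m' h => by
    rw [← winRep_add_mul_winQuot N m, ← winRep_add_mul_winQuot N m']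
    simp_all only [Prod.mk.injEq]

lemma winRep_mem_window {N : ℕ} (hN : Even N) (hN0 : 0 < N) (m : ℤ) : winRep N m ∈ window N := by
  obtain ⟨H, rfl⟩ := hN
  have hpos : (0 : ℤ) < (H + H : ℕ) := by omega
  have h₀ := Int.emod_nonneg (m + ((H + H : ℕ) : ℤ) / 2 - 1) hpos.ne'
  have h₁ := Int.emod_lt_of_pos (m + ((H + H : ℕ) : ℤ) / 2 - 1) hpos
  simp only [winRep, window, Finset.mem_Icc]
  omega

lemma winRep_eq_self {N : ℕ} (hN : Even N) {m : ℤ} (hm : m ∈ window N) : winRep N m = m := by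
  obtain ⟨H, rfl⟩ := hN
  simp only [window, Finset.mem_Icc] at hm
  unfold winRep
  rw [Int.emod_eq_of_lt] <;> omega

lemma two_mul_natAbs_le_of_mem_window {N : ℕ} (hN : Even N) {k : ℤ} (hk : k ∈ window N) :
    2 * k.natAbs ≤ N := by
  obtain ⟨H, rfl⟩ := hN
  simp only [window, Finset.mem_Icc] at hk
  omega

lemma natAbs_bounds_of_wrap {N : ℕ} {k j : ℤ} (hN : 2 ≤ N) (hk : 2 * k.natAbs ≤ N) (hj : j ≠ 0) :
    2 * N + j.natAbs ≤ 2 * ((k + N * j).natAbs + k.natAbs) + 1 ∧ N ≤ 2 * (k + N * j).natAbs ∧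
      k.natAbs + j.natAbs ≤ 2 * (k + N * j).natAbs := by
  have htri : (N * j).natAbs ≤ (k + N * j).natAbs + k.natAbs := by
    simpa using Int.natAbs_sub_le (k + N * j) k
  obtain ⟨i, hi⟩ : ∃ i, j.natAbs = i + 1 := ⟨j.natAbs - 1, by omega⟩
  rw [Int.natAbs_mul, Int.natAbs_natCast, hi, Nat.mul_succ] at htri
  have hNi : 2 * i ≤ N * i := Nat.mul_le_mul_right i hN
  omega

section PowerBounds

variable {r ζ : ℝ} {N a b c : ℕ}

lemma pow_mul_pow_le_of_wrap (hr0 : 0 < r) (hrζ : r ≤ ζ) (hζ1 : ζ ≤ 1)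
    (h : 2 * N + c ≤ 2 * (a + b) + 1) :
    r ^ (2 * (a + b)) * ζ ^ b ≤ r⁻¹ * r ^ (2 * N) * ζ ^ (b + c) := by
  have hr : r ^ (2 * (a + b)) ≤ r⁻¹ * (r ^ (2 * N) * r ^ c) := by
    rw [← pow_add, le_inv_mul_iff₀ hr0, ← pow_succ']
    exact pow_le_pow_of_le_one hr0.le (hrζ.trans hζ1) h
  calc r ^ (2 * (a + b)) * ζ ^ b ≤ r⁻¹ * (r ^ (2 * N) * ζ ^ c) * ζ ^ b := by
        refine mul_le_mul_of_nonneg_right (hr.trans ?_) (pow_nonneg (hr0.le.trans hrζ) b)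
        gcongr
    _ = r⁻¹ * r ^ (2 * N) * ζ ^ (b + c) := by ring

lemma mul_sq_pow_sq_le_of_wrap (hr0 : 0 ≤ r) (hr1 : r ≤ 1) (hζ0 : 0 ≤ ζ) (hζ1 : ζ ≤ 1)
    (hN : N ≤ 2 * a) (hbc : b + c ≤ 2 * a) :
    ((ζ * r ^ 2) ^ a) ^ 2 ≤ r ^ (2 * N) * ζ ^ (b + c) :=
  calc ((ζ * r ^ 2) ^ a) ^ 2 = ζ ^ (2 * a) * r ^ (2 * (2 * a)) := by ring
    _ ≤ ζ ^ (b + c) * r ^ (2 * N) :=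
        mul_le_mul (pow_le_pow_of_le_one hζ0 hζ1 hbc) (pow_le_pow_of_le_one hr0 hr1 (by omega))
          (by positivity) (by positivity)
    _ = r ^ (2 * N) * ζ ^ (b + c) := mul_comm _ _

/-- The alias `m = k + N j` of `k`, with `a = |m|`, `b = |k|`, `c = |j|`. -/
lemma norm_mul_sub_sq_le_of_wrap {x y w : ℂ} {Cs M Cv : ℝ} (hr0 : 0 < r) (hrζ : r ≤ ζ)
    (hζ1 : ζ ≤ 1) (hx : ‖x‖ ≤ Cs * r ^ a) (hy : ‖y‖ ^ 2 ≤ M ^ 2 * (ζ * r ^ 2) ^ b)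
    (hw : ‖w‖ ≤ Cv * (ζ * r ^ 2) ^ a) (h₁ : 2 * N + c ≤ 2 * (a + b) + 1) (h₂ : N ≤ 2 * a)
    (h₃ : b + c ≤ 2 * a) :
    ‖x * y - w‖ ^ 2 ≤ 2 * (Cs ^ 2 * M ^ 2 * r⁻¹ + Cv ^ 2) * r ^ (2 * N) * ζ ^ (b + c) := by
  have hxy : ‖x * y‖ ^ 2 ≤ Cs ^ 2 * M ^ 2 * (r ^ (2 * (a + b)) * ζ ^ b) :=
    calc ‖x * y‖ ^ 2 = ‖x‖ ^ 2 * ‖y‖ ^ 2 := by rw [norm_mul, mul_pow]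
      _ ≤ (Cs * r ^ a) ^ 2 * (M ^ 2 * (ζ * r ^ 2) ^ b) := by gcongr
      _ = _ := by ring
  have hw' : ‖w‖ ^ 2 ≤ Cv ^ 2 * ((ζ * r ^ 2) ^ a) ^ 2 := by
    rw [← mul_pow]; gcongr
  calc ‖x * y - w‖ ^ 2 ≤ 2 * (‖x * y‖ ^ 2 + ‖w‖ ^ 2) :=
        (pow_le_pow_left₀ (norm_nonneg _) (norm_sub_le _ _) 2).trans add_sq_le
    _ ≤ 2 * (Cs ^ 2 * M ^ 2 * (r⁻¹ * r ^ (2 * N) * ζ ^ (b + c)) +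
          Cv ^ 2 * (r ^ (2 * N) * ζ ^ (b + c))) := by
        gcongr
        · exact hxy.trans (mul_le_mul_of_nonneg_left (pow_mul_pow_le_of_wrap hr0 hrζ hζ1 h₁)
            (by positivity))
        · exact hw'.trans (mul_le_mul_of_nonneg_left (mul_sq_pow_sq_le_of_wrap hr0.le
            (hrζ.trans hζ1) (hr0.le.trans hrζ) hζ1 h₂ h₃) (by positivity))
    _ = _ := by ring

end PowerBounds

lemma norm_collocation_error_sq_le {s v φ : ℤ → ℂ} {N : ℕ} {r ζ Cs M Cv : ℝ} (hN : Even N)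
    (hN2 : 2 ≤ N) (hr0 : 0 < r) (hrζ : r ≤ ζ) (hζ1 : ζ ≤ 1)
    (hs : ∀ m ≠ 0, ‖s m‖ ≤ Cs * r ^ m.natAbs)
    (hφ : ∀ k, ‖φ k‖ ^ 2 ≤ M ^ 2 * (ζ * r ^ 2) ^ k.natAbs)
    (hv : ∀ m, ‖v m‖ ≤ Cv * (ζ * r ^ 2) ^ m.natAbs) (hsφ : ∀ k, s k * φ k = v k) (m : ℤ) :
    ‖s m * φ (winRep N m) - v m‖ ^ 2 ≤ 2 * (Cs ^ 2 * M ^ 2 * r⁻¹ + Cv ^ 2) * r ^ (2 * N) *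
      (ζ ^ (winRep N m).natAbs * ζ ^ (winQuot N m).natAbs) := by
  by_cases hm : m ∈ window N
  · rw [winRep_eq_self hN hm, hsφ, sub_self, norm_zero, sq, zero_mul]
    have hζ0 : 0 ≤ ζ := hr0.le.trans hrζ
    positivity
  have hj : winQuot N m ≠ 0 := fun hj => hm <| by
    have hmk := winRep_add_mul_winQuot N m
    rw [hj, mul_zero, add_zero] at hmk
    exact hmk ▸ winRep_mem_window hN (by omega) m
  obtain ⟨h₁, h₂, h₃⟩ := winRep_add_mul_winQuot N m ▸ natAbs_bounds_of_wrap hN2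
    (two_mul_natAbs_le_of_mem_window hN (winRep_mem_window hN (by omega) m)) hj
  rw [← pow_add]
  exact norm_mul_sub_sq_le_of_wrap hr0 hrζ hζ1 (hs m (by omega)) (hφ _) (hv m) h₁ h₂ h₃

section EigenvalueBounds

variable {R ρ cs Cs Cv : ℝ} {s v : ℤ → ℂ}

lemma ne_zero_of_norm_lower_bound (hR : 0 < R) (hcs : 0 < cs) (hs0 : s 0 ≠ 0)
    (hsl : ∀ m : ℤ, m ≠ 0 → cs / |(m : ℝ)| * R ^ (-|m|) ≤ ‖s m‖) (k : ℤ) : s k ≠ 0 := by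
  rcases eq_or_ne k 0 with rfl | hk
  · exact hs0
  · exact norm_pos_iff.1 <| (mul_pos (div_pos hcs (abs_pos.2 (Int.cast_ne_zero.2 hk)))
      (zpow_pos hR _)).trans_le (hsl k hk)

lemma norm_le_mul_inv_pow_natAbs (hR : 0 < R) (hCs : 0 ≤ Cs)
    (hsu : ∀ m : ℤ, m ≠ 0 → ‖s m‖ ≤ Cs / |(m : ℝ)| * R ^ (-|m|)) {m : ℤ} (hm : m ≠ 0) :
    ‖s m‖ ≤ Cs * R⁻¹ ^ m.natAbs := by
  refine (hsu m hm).trans ?_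
  rw [zpow_neg_abs_eq_inv_pow_natAbs]
  gcongr
  exact div_le_self hCs (by exact_mod_cast Int.one_le_abs hm)

lemma norm_div_le_of_eigenvalue_bounds (hR : 0 < R) (hρ : 0 < ρ) (hcs : 0 < cs)
    (hsl : ∀ m : ℤ, m ≠ 0 → cs / |(m : ℝ)| * R ^ (-|m|) ≤ ‖s m‖)
    (hv : ∀ m : ℤ, ‖v m‖ ≤ Cv * ρ ^ (-|m|)) {k : ℤ} (hk : k ≠ 0) :
    ‖v k / s k‖ ≤ Cv / cs * k.natAbs * (R / ρ) ^ k.natAbs := by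
  have hn : (0 : ℝ) < k.natAbs := Nat.cast_pos.2 (Int.natAbs_pos.2 hk)
  have hs := hsl k hk
  have hvk := hv k
  rw [zpow_neg_abs_eq_inv_pow_natAbs, ← Int.cast_abs, ← Nat.cast_natAbs] at hs
  rw [zpow_neg_abs_eq_inv_pow_natAbs] at hvk
  rw [norm_div]
  calc ‖v k‖ / ‖s k‖ ≤ Cv * ρ⁻¹ ^ k.natAbs / (cs / k.natAbs * R⁻¹ ^ k.natAbs) :=
        div_le_div₀ ((norm_nonneg _).trans hvk) hvk (by positivity) hs
    _ = Cv / cs * k.natAbs * (R / ρ) ^ k.natAbs := by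
        rw [inv_pow, inv_pow, div_pow]
        field_simp

lemma exists_norm_div_sq_le (hR : 0 < R) (hρ : R ^ 2 < ρ) (hcs : 0 < cs) (hCv : 0 ≤ Cv)
    (hsl : ∀ m : ℤ, m ≠ 0 → cs / |(m : ℝ)| * R ^ (-|m|) ≤ ‖s m‖)
    (hv : ∀ m : ℤ, ‖v m‖ ≤ Cv * ρ ^ (-|m|)) :
    ∃ M, ∀ k, ‖v k / s k‖ ^ 2 ≤ M ^ 2 * ρ⁻¹ ^ k.natAbs := by
  have hρ0 : 0 < ρ := (pow_pos hR 2).trans hρ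
  -- `ρ^{-1/2}` lies strictly between `R / ρ` and `R⁻¹` exactly when `ρ > R²`
  have hRρ : R / ρ < (√ρ)⁻¹ := by
    rw [div_lt_iff₀ hρ0, inv_mul_eq_div, Real.div_sqrt]
    exact (Real.lt_sqrt hR.le).2 hρ
  obtain ⟨M, hM⟩ := exists_le_mul_pow_natAbs (div_nonneg hCv hcs.le) (by positivity) hRρ
    fun k hk => norm_div_le_of_eigenvalue_bounds hR hρ0 hcs hsl hv hk
  refine ⟨M, fun k => ?_⟩
  calc ‖v k / s k‖ ^ 2 ≤ (M * (√ρ)⁻¹ ^ k.natAbs) ^ 2 := by gcongr; exact hM k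
    _ = M ^ 2 * ρ⁻¹ ^ k.natAbs := by
      rw [mul_pow, ← pow_mul, mul_comm k.natAbs, pow_mul, inv_pow, Real.sq_sqrt hρ0.le]

end EigenvalueBounds

lemma tErr_scaled_coeff {N : ℕ} (hN : N ≠ 0) (s v φ : ℤ → ℂ) :
    tErr N s v (fun k => 2 * (Real.pi : ℂ) / N * φ k) =
      (ENNReal.ofReal (2 * Real.pi) *
        ∑' m : ℤ, ENNReal.ofReal (‖s m * φ (winRep N m) - v m‖ ^ 2)) ^ (1 / 2 : ℝ) := by
  have hN' : (N : ℂ) ≠ 0 := Nat.cast_ne_zero.2 hN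
  have hπ : (Real.pi : ℂ) ≠ 0 := Complex.ofReal_ne_zero.2 Real.pi_ne_zero
  unfold tErr
  congr 3 with m
  rw [ENNReal.ofReal_pow (norm_nonneg _), ← ENNReal.ofReal_coe_nnreal, coe_nnnorm]
  congr 3
  field_simp

lemma tErr_scaled_coeff_le {N : ℕ} (hN : N ≠ 0) {s v φ : ℤ → ℂ} {A x ζ : ℝ} (hA : 0 ≤ A)
    (hx : 0 ≤ x) (hζ0 : 0 ≤ ζ) (hζ1 : ζ < 1)
    (h : ∀ m, ‖s m * φ (winRep N m) - v m‖ ^ 2 ≤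
      A * x ^ (2 * N) * (ζ ^ (winRep N m).natAbs * ζ ^ (winQuot N m).natAbs)) :
    tErr N s v (fun k => 2 * (Real.pi : ℂ) / N * φ k) ≤
      ENNReal.ofReal (√(2 * Real.pi * (A * (2 * (1 - ζ)⁻¹) ^ 2)) * x ^ N) := by
  rw [tErr_scaled_coeff hN]
  refine ENNReal.ofReal_mul_rpow_half_le (by positivity) (by positivity) (by positivity) ?_
  refine (tsum_le_of_le_pow_natAbs (injective_winRep_winQuot N) (by positivity) hζ0 hζ1
    fun m => ENNReal.ofReal_le_ofReal (h m)).trans_eq ?_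
  congr 1
  ring

theorem mfs_convergence_rho_gt_Rsq_general
    (R ρ cs Cs Cv : ℝ) (hR : 1 < R) (hρ2 : R ^ 2 < ρ)
    (hcs : 0 < cs) (hcsCs : cs ≤ Cs) (hCv : 0 < Cv)
    (s v : ℤ → ℂ)
    (hs0 : s 0 ≠ 0)
    (hsl : ∀ m : ℤ, m ≠ 0 → cs / |(m : ℝ)| * R ^ (-|m|) ≤ ‖s m‖)
    (hsu : ∀ m : ℤ, m ≠ 0 → ‖s m‖ ≤ Cs / |(m : ℝ)| * R ^ (-|m|))
    (hv : ∀ m : ℤ, ‖v m‖ ≤ Cv * ρ ^ (-|m|)) :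
    ∃ C : ℝ, 0 < C ∧ ∀ N : ℕ, Even N → 2 ≤ N →
      ∃ a : ℤ → ℂ, tErr N s v a ≤ ENNReal.ofReal (C * R ^ (-(N : ℝ))) := by
  have hR0 : 0 < R := by linarith
  have hρ0 : 0 < ρ := (pow_pos hR0 2).trans hρ2
  set r := R⁻¹
  set ζ := max (R ^ 2 / ρ) r
  have hr0 : 0 < r := inv_pos.2 hR0
  have hζ1 : ζ < 1 := max_lt ((div_lt_one hρ0).2 hρ2) (inv_lt_one_of_one_lt₀ hR)
  have hρζ : ρ⁻¹ ≤ ζ * r ^ 2 :=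
    calc ρ⁻¹ = R ^ 2 / ρ * r ^ 2 := by simp only [r]; field_simp
      _ ≤ ζ * r ^ 2 := by gcongr; exact le_max_left _ _
  obtain ⟨M, hM⟩ := exists_norm_div_sq_le hR0 hρ2 hcs hCv.le hsl hv
  have h1ζ : 0 < 1 - ζ := by linarith
  refine ⟨√(2 * Real.pi * (2 * (Cs ^ 2 * M ^ 2 * r⁻¹ + Cv ^ 2) * (2 * (1 - ζ)⁻¹) ^ 2)),
    by positivity, fun N hN hN2 => ⟨fun k => 2 * (Real.pi : ℂ) / N * (v k / s k), ?_⟩⟩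
  rw [Real.rpow_neg hR0.le, Real.rpow_natCast, ← inv_pow]
  refine tErr_scaled_coeff_le (by omega) (by positivity) hr0.le
    (hr0.le.trans (le_max_right _ _)) hζ1 fun m => ?_
  refine norm_collocation_error_sq_le hN hN2 hr0 (le_max_right _ _) hζ1.le
    (fun m hm => norm_le_mul_inv_pow_natAbs hR0 (hcs.le.trans hcsCs) hsu hm)
    (fun k => (hM k).trans (by gcongr)) (fun m => (hv m).trans ?_)
    (fun k => mul_div_cancel₀ _ (ne_zero_of_norm_lower_bound hR0 hcs hs0 hsl k)) m
  rw [zpow_neg_abs_eq_inv_pow_natAbs]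
  gcongr

/-- MFS convergence on the unit disc, case `ρ > R²`: rate `R^{-N}`. -/
theorem mfs_convergence_rho_gt_Rsq
    (R ρ cs Cs Cv : ℝ) (hR : 1 < R) (hρ1 : 1 < ρ) (hρ2 : R ^ 2 < ρ)
    (hcs : 0 < cs) (hcsCs : cs ≤ Cs) (hCv : 0 < Cv)
    (s v : ℤ → ℂ)
    (hs0 : s 0 ≠ 0) (hs0' : ‖s 0‖ ≤ Cs)
    (hsl : ∀ m : ℤ, m ≠ 0 → cs / |(m : ℝ)| * R ^ (-|m|) ≤ ‖s m‖)
    (hsu : ∀ m : ℤ, m ≠ 0 → ‖s m‖ ≤ Cs / |(m : ℝ)| * R ^ (-|m|))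
    (hv : ∀ m : ℤ, ‖v m‖ ≤ Cv * ρ ^ (-|m|)) :
    ∃ C : ℝ, 0 < C ∧ ∀ N : ℕ, Even N → 2 ≤ N →
      ∃ a : ℤ → ℂ, tErr N s v a ≤ ENNReal.ofReal (C * R ^ (-(N : ℝ))) :=
  mfs_convergence_rho_gt_Rsq_general R ρ cs Cs Cv hR hρ2 hcs hcsCs hCv s v hs0 hsl hsu hv
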